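/- Let E be a real normed vector space, let λ ∈ (0,1), and let f, g : E → ℝ be convex continuous functions admitting a common continuous affine minorant (there exist φ₀ ∈ E* and c ∈ ℝ with φ₀(u) − c ≤ f(u) and φ₀(u) − c ≤ g(u) for all u ∈ E). For s ∈ [0,1] define G_s(f,g;λ)(x) = (sin(πλ)/π) ∫₀¹ t^{λ−1}(1−t)^{−λ} (f !_{st+(1−s)λ} g)(x) dt. Then for every s ∈ [0,1] and every x ∈ E, (f !_λ g)(x) ≤ G_s(f,g;λ)(x) ≤ (1−s)(f !_λ g)(x) + s(f ♯_λ g)(x) ≤ (f ♯_λ g)(x). -/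

import Mathlib

/-! For fixed `x`, `t ↦ (f !_t g)(x)` is a supremum of affine functions of `t`, one for each
admissible triple `(φ, c₁, c₂)`; the common affine minorant makes it finite, so it is convex and
bounded on `[0, 1]`. The normalized weight `(sin πλ / π) t^(λ-1) (1-t)^(-λ)` is the density of the
Beta(λ, 1-λ) distribution, whose mean is `λ`. The first inequality is Jensen's inequality for this
distribution, checked on each affine piece; the second integrates the convexity inequality
`(f !_(st+(1-s)λ) g)(x) ≤ (1-s) (f !_λ g)(x) + s (f !_t g)(x)`; the third is the first one at
`s = 1`. -/

open Real

/-- The `t`-weighted functional harmonic mean of `f,g : E → ℝ`, evaluated at `x`. -/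
noncomputable def funHarm {E : Type*} [NormedAddCommGroup E] [NormedSpace ℝ E]
    (f g : E → ℝ) (t : ℝ) (x : E) : ℝ :=
  sSup { r : ℝ | ∃ φ : E →L[ℝ] ℝ, ∃ c₁ c₂ : ℝ,
    (∀ u : E, φ u - f u ≤ c₁) ∧ (∀ u : E, φ u - g u ≤ c₂) ∧
    r = φ x - (1 - t) * c₁ - t * c₂ }

/-- The `λ`-weighted functional geometric mean of `f,g : E → ℝ`, evaluated at `x`. -/
noncomputable def funGeom {E : Type*} [NormedAddCommGroup E] [NormedSpace ℝ E]
    (f g : E → ℝ) (l : ℝ) (x : E) : ℝ :=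
  (Real.sin (π * l) / π) *
    ∫ t in (0 : ℝ)..1, t ^ (l - 1) * (1 - t) ^ (-l) * funHarm f g t x

/-- The family `G_s(f,g;λ)(x) = (sin(πλ)/π) ∫₀¹ t^{λ−1}(1−t)^{−λ} (f !_{st+(1−s)λ} g)(x) dt`. -/
noncomputable def funG {E : Type*} [NormedAddCommGroup E] [NormedSpace ℝ E]
    (f g : E → ℝ) (l s : ℝ) (x : E) : ℝ :=
  (Real.sin (π * l) / π) *
    ∫ t in (0 : ℝ)..1, t ^ (l - 1) * (1 - t) ^ (-l) * funHarm f g (s * t + (1 - s) * l) x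

open Set MeasureTheory

lemma Convex.mul_add_one_sub_mul_mem {S : Set ℝ} (hS : Convex ℝ S) {t u s : ℝ} (ht : t ∈ S)
    (hu : u ∈ S) (hs : s ∈ Icc (0 : ℝ) 1) : s * t + (1 - s) * u ∈ S :=
  hS ht hu hs.1 (sub_nonneg.2 hs.2) (add_sub_cancel s 1)

lemma ofReal_cpow_mul_one_sub_cpow {a b t : ℝ} (ht : t ∈ Icc (0 : ℝ) 1) :
    (t : ℂ) ^ ((a : ℂ) - 1) * (1 - (t : ℂ)) ^ ((b : ℂ) - 1)
      = ((t ^ (a - 1) * (1 - t) ^ (b - 1) : ℝ) : ℂ) := by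
  rw [Complex.ofReal_mul, Complex.ofReal_cpow ht.1, Complex.ofReal_cpow (sub_nonneg.2 ht.2)]
  push_cast
  ring

lemma intervalIntegrable_rpow_mul_one_sub_rpow {a b : ℝ} (ha : 0 < a) (hb : 0 < b) :
    IntervalIntegrable (fun t : ℝ => t ^ (a - 1) * (1 - t) ^ (b - 1)) volume 0 1 := by
  have hC := Complex.betaIntegral_convergent (u := a) (v := b) (by simpa) (by simpa)
  rw [intervalIntegrable_iff_integrableOn_Ioc_of_le zero_le_one] at hC ⊢
  refine hC.re.congr ?_
  filter_upwards [ae_restrict_mem measurableSet_Ioc] with t ht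
  simp [ofReal_cpow_mul_one_sub_cpow (Ioc_subset_Icc_self ht)]

lemma integral_rpow_mul_one_sub_rpow {a b : ℝ} (ha : 0 < a) (hb : 0 < b) :
    ∫ t in (0 : ℝ)..1, t ^ (a - 1) * (1 - t) ^ (b - 1)
      = Real.Gamma a * Real.Gamma b / Real.Gamma (a + b) := by
  have hbeta : Complex.betaIntegral a b
      = ((∫ t in (0 : ℝ)..1, t ^ (a - 1) * (1 - t) ^ (b - 1) : ℝ) : ℂ) := by
    rw [Complex.betaIntegral, ← intervalIntegral.integral_ofReal]
    refine intervalIntegral.integral_congr fun t ht => ?_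
    rw [uIcc_of_le zero_le_one] at ht
    exact ofReal_cpow_mul_one_sub_cpow ht
  have key := Complex.Gamma_mul_Gamma_eq_betaIntegral (s := a) (t := b) (by simpa) (by simpa)
  rw [hbeta, ← Complex.ofReal_add, Complex.Gamma_ofReal, Complex.Gamma_ofReal,
    Complex.Gamma_ofReal] at key
  rw [eq_div_iff (Real.Gamma_pos_of_pos (add_pos ha hb)).ne', mul_comm]
  exact_mod_cast key.symm

noncomputable def betaWeight (l t : ℝ) : ℝ := t ^ (l - 1) * (1 - t) ^ (-l)

noncomputable def betaMean (l : ℝ) (F : ℝ → ℝ) : ℝ :=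
  (sin (π * l) / π) * ∫ t in (0 : ℝ)..1, betaWeight l t * F t

section BetaMean

variable {l : ℝ}

lemma betaWeight_nonneg {t : ℝ} (ht : t ∈ Icc (0 : ℝ) 1) : 0 ≤ betaWeight l t :=
  mul_nonneg (rpow_nonneg ht.1 _) (rpow_nonneg (sub_nonneg.2 ht.2) _)

lemma betaWeight_eq (l : ℝ) :
    betaWeight l = fun t => t ^ (l - 1) * (1 - t) ^ ((1 - l) - 1) := by
  ext t
  rw [betaWeight, sub_sub_cancel_left]

lemma betaWeight_mul_self_eqOn :
    EqOn (fun t => betaWeight l t * t) (fun t => t ^ ((l + 1) - 1) * (1 - t) ^ ((1 - l) - 1))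
      (Ioo 0 1) := by
  intro t ht
  simp only [betaWeight, add_sub_cancel_right, sub_sub_cancel_left]
  rw [mul_right_comm, ← rpow_add_one ht.1.ne', sub_add_cancel]

variable (hl : l ∈ Ioo (0 : ℝ) 1)
include hl

lemma sin_pi_mul_pos : 0 < sin (π * l) :=
  sin_pos_of_pos_of_lt_pi (mul_pos pi_pos hl.1) (by nlinarith [pi_pos, hl.2])

lemma intervalIntegrable_betaWeight : IntervalIntegrable (betaWeight l) volume 0 1 := by
  rw [betaWeight_eq]
  exact intervalIntegrable_rpow_mul_one_sub_rpow hl.1 (sub_pos.2 hl.2)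

lemma integral_betaWeight : ∫ t in (0 : ℝ)..1, betaWeight l t = π / sin (π * l) := by
  rw [betaWeight_eq, integral_rpow_mul_one_sub_rpow hl.1 (sub_pos.2 hl.2), add_sub_cancel,
    Real.Gamma_one, div_one, Real.Gamma_mul_Gamma_one_sub]

lemma intervalIntegrable_betaWeight_mul_self :
    IntervalIntegrable (fun t => betaWeight l t * t) volume 0 1 :=
  (intervalIntegrable_rpow_mul_one_sub_rpow (a := l + 1) (by linarith [hl.1])
    (sub_pos.2 hl.2)).congr_uIoo
    (by rw [uIoo_of_le zero_le_one]; exact betaWeight_mul_self_eqOn.symm)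

lemma integral_betaWeight_mul_self :
    ∫ t in (0 : ℝ)..1, betaWeight l t * t = l * (π / sin (π * l)) := by
  rw [intervalIntegral.integral_congr_Ioo_of_le zero_le_one betaWeight_mul_self_eqOn,
    integral_rpow_mul_one_sub_rpow (by linarith [hl.1]) (sub_pos.2 hl.2),
    Real.Gamma_add_one hl.1.ne', show l + 1 + (1 - l) = 2 by ring, Real.Gamma_two, div_one,
    mul_assoc, Real.Gamma_mul_Gamma_one_sub]

lemma intervalIntegrable_betaWeight_mul {F : ℝ → ℝ} {C : ℝ} (hF : ContinuousOn F (Ioo 0 1))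
    (hFC : ∀ t ∈ Ioo (0 : ℝ) 1, |F t| ≤ C) :
    IntervalIntegrable (fun t => betaWeight l t * F t) volume 0 1 := by
  rw [intervalIntegrable_iff_integrableOn_Ioo_of_le zero_le_one]
  exact ((intervalIntegrable_iff_integrableOn_Ioo_of_le zero_le_one).1
    (intervalIntegrable_betaWeight hl)).mul_bdd (hF.aestronglyMeasurable measurableSet_Ioo)
    (ae_restrict_of_forall_mem measurableSet_Ioo hFC)

lemma intervalIntegrable_betaWeight_mul_const_add_mul {F : ℝ → ℝ}
    (hF : IntervalIntegrable (fun t => betaWeight l t * F t) volume 0 1) (a b : ℝ) :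
    IntervalIntegrable (fun t => betaWeight l t * (a + b * F t)) volume 0 1 := by
  simp only [mul_add, mul_left_comm (betaWeight l _), mul_comm (betaWeight l _) a]
  exact ((intervalIntegrable_betaWeight hl).const_mul a).add (hF.const_mul b)

lemma betaMean_const_add_mul {F : ℝ → ℝ}
    (hF : IntervalIntegrable (fun t => betaWeight l t * F t) volume 0 1) (a b : ℝ) :
    betaMean l (fun t => a + b * F t) = a + b * betaMean l F := by
  have hsin := sin_pi_mul_pos hl
  simp only [betaMean, mul_add, mul_left_comm (betaWeight l _), mul_comm (betaWeight l _) a]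
  rw [intervalIntegral.integral_add ((intervalIntegrable_betaWeight hl).const_mul a)
      (hF.const_mul b), intervalIntegral.integral_const_mul, intervalIntegral.integral_const_mul,
    integral_betaWeight hl]
  field_simp

lemma betaMean_self : betaMean l (fun t => t) = l := by
  have hsin := sin_pi_mul_pos hl
  rw [betaMean, integral_betaWeight_mul_self hl]
  field_simp

lemma betaMean_mono {F G : ℝ → ℝ}
    (hF : IntervalIntegrable (fun t => betaWeight l t * F t) volume 0 1)
    (hG : IntervalIntegrable (fun t => betaWeight l t * G t) volume 0 1)
    (hFG : ∀ t ∈ Icc (0 : ℝ) 1, F t ≤ G t) : betaMean l F ≤ betaMean l G :=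
  mul_le_mul_of_nonneg_left
    (intervalIntegral.integral_mono_on zero_le_one hF hG
      fun t ht => mul_le_mul_of_nonneg_left (hFG t ht) (betaWeight_nonneg ht))
    (div_pos (sin_pi_mul_pos hl) pi_pos).le

lemma affine_le_betaMean {F : ℝ → ℝ}
    (hF : IntervalIntegrable (fun t => betaWeight l t * F t) volume 0 1) {a b : ℝ}
    (hab : ∀ t ∈ Icc (0 : ℝ) 1, a + b * t ≤ F t) : a + b * l ≤ betaMean l F := by
  have hid := intervalIntegrable_betaWeight_mul_self hl
  calc a + b * l = betaMean l (fun t => a + b * t) := by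
        rw [betaMean_const_add_mul hl hid, betaMean_self hl]
    _ ≤ betaMean l F :=
        betaMean_mono hl (intervalIntegrable_betaWeight_mul_const_add_mul hl hid a b) hF hab

end BetaMean

section FunHarm

variable {E : Type*} [NormedAddCommGroup E] [NormedSpace ℝ E] {f g : E → ℝ} {x : E} {t : ℝ}

lemma le_funHarm (ht : t ∈ Icc (0 : ℝ) 1) {φ : E →L[ℝ] ℝ} {c₁ c₂ : ℝ}
    (h₁ : ∀ u, φ u - f u ≤ c₁) (h₂ : ∀ u, φ u - g u ≤ c₂) :
    φ x - (1 - t) * c₁ - t * c₂ ≤ funHarm f g t x := by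
  refine le_csSup ⟨(1 - t) * f x + t * g x, ?_⟩ ⟨φ, c₁, c₂, h₁, h₂, rfl⟩
  rintro r ⟨ψ, d₁, d₂, k₁, k₂, rfl⟩
  nlinarith [mul_le_mul_of_nonneg_left (k₁ x) (sub_nonneg.2 ht.2),
    mul_le_mul_of_nonneg_left (k₂ x) ht.1]

lemma funHarm_le_of_forall
    (hmin : ∃ φ₀ : E →L[ℝ] ℝ, ∃ c : ℝ, ∀ u : E, φ₀ u - c ≤ f u ∧ φ₀ u - c ≤ g u) {a : ℝ}
    (ha : ∀ (φ : E →L[ℝ] ℝ) (c₁ c₂ : ℝ), (∀ u, φ u - f u ≤ c₁) → (∀ u, φ u - g u ≤ c₂) →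
      φ x - (1 - t) * c₁ - t * c₂ ≤ a) :
    funHarm f g t x ≤ a := by
  obtain ⟨φ₀, c, h₀⟩ := hmin
  refine csSup_le ⟨_, φ₀, c, c, fun u => by linarith [(h₀ u).1],
    fun u => by linarith [(h₀ u).2], rfl⟩ ?_
  rintro r ⟨φ, c₁, c₂, h₁, h₂, rfl⟩
  exact ha φ c₁ c₂ h₁ h₂

variable (hmin : ∃ φ₀ : E →L[ℝ] ℝ, ∃ c : ℝ, ∀ u : E, φ₀ u - c ≤ f u ∧ φ₀ u - c ≤ g u)
include hmin

lemma exists_abs_funHarm_le : ∃ C, ∀ t ∈ Icc (0 : ℝ) 1, |funHarm f g t x| ≤ C := by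
  obtain ⟨φ₀, c, h₀⟩ := hmin
  refine ⟨max |φ₀ x - c| |max (f x) (g x)|, fun t ht => abs_le_max_abs_abs ?_ ?_⟩
  · have := le_funHarm (f := f) (g := g) (x := x) ht (φ := φ₀) (c₁ := c) (c₂ := c)
      (fun u => by linarith [(h₀ u).1]) (fun u => by linarith [(h₀ u).2])
    linarith
  · refine funHarm_le_of_forall ⟨φ₀, c, h₀⟩ fun φ c₁ c₂ h₁ h₂ => ?_
    nlinarith [h₁ x, h₂ x, le_max_left (f x) (g x), le_max_right (f x) (g x), ht.1, ht.2]

lemma convexOn_funHarm : ConvexOn ℝ (Icc 0 1) (fun t => funHarm f g t x) := by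
  refine ⟨convex_Icc 0 1, fun p hp q hq a b ha hb hab => ?_⟩
  refine funHarm_le_of_forall hmin fun φ c₁ c₂ h₁ h₂ => ?_
  have hpq : φ x - (1 - (a • p + b • q)) * c₁ - (a • p + b • q) * c₂
      = a * (φ x - (1 - p) * c₁ - p * c₂) + b * (φ x - (1 - q) * c₁ - q * c₂) := by
    simp only [smul_eq_mul]
    linear_combination (c₁ - φ x) * hab
  rw [hpq]
  exact add_le_add (mul_le_mul_of_nonneg_left (le_funHarm hp h₁ h₂) ha)
    (mul_le_mul_of_nonneg_left (le_funHarm hq h₁ h₂) hb)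

lemma continuousOn_funHarm : ContinuousOn (fun t => funHarm f g t x) (Ioo 0 1) :=
  ((convexOn_funHarm hmin).subset Ioo_subset_Icc_self (convex_Ioo 0 1)).continuousOn isOpen_Ioo

end FunHarm

section FunG

variable {E : Type*} [NormedAddCommGroup E] [NormedSpace ℝ E] {f g : E → ℝ} {l s : ℝ} {x : E}

lemma funGeom_eq_betaMean : funGeom f g l x = betaMean l (fun t => funHarm f g t x) := rfl

lemma funG_eq_betaMean :
    funG f g l s x = betaMean l (fun t => funHarm f g (s * t + (1 - s) * l) x) := rfl

lemma funG_one : funG f g l 1 x = funGeom f g l x := by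
  simp [funG, funGeom]

variable (hl : l ∈ Ioo (0 : ℝ) 1)
    (hmin : ∃ φ₀ : E →L[ℝ] ℝ, ∃ c : ℝ, ∀ u : E, φ₀ u - c ≤ f u ∧ φ₀ u - c ≤ g u)
include hl hmin

lemma intervalIntegrable_betaWeight_mul_funHarm_comp {σ : ℝ → ℝ}
    (hσ : ContinuousOn σ (Ioo 0 1)) (hσI : MapsTo σ (Ioo 0 1) (Ioo 0 1)) :
    IntervalIntegrable (fun t => betaWeight l t * funHarm f g (σ t) x) volume 0 1 := by
  obtain ⟨C, hC⟩ := exists_abs_funHarm_le (x := x) hmin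
  exact intervalIntegrable_betaWeight_mul hl ((continuousOn_funHarm hmin).comp hσ hσI)
    fun t ht => hC _ (Ioo_subset_Icc_self (hσI ht))

lemma intervalIntegrable_betaWeight_mul_funHarm :
    IntervalIntegrable (fun t => betaWeight l t * funHarm f g t x) volume 0 1 :=
  intervalIntegrable_betaWeight_mul_funHarm_comp hl hmin continuousOn_id (mapsTo_id _)

lemma intervalIntegrable_betaWeight_mul_funHarm_convex_comb (hs : s ∈ Icc (0 : ℝ) 1) :
    IntervalIntegrable (fun t => betaWeight l t * funHarm f g (s * t + (1 - s) * l) x)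
      volume 0 1 :=
  intervalIntegrable_betaWeight_mul_funHarm_comp hl hmin (by fun_prop)
    fun _ ht => (convex_Ioo 0 1).mul_add_one_sub_mul_mem ht hl hs

theorem funHarm_le_funG (hs : s ∈ Icc (0 : ℝ) 1) : funHarm f g l x ≤ funG f g l s x := by
  refine funHarm_le_of_forall hmin fun φ c₁ c₂ h₁ h₂ => ?_
  have hσ : ∀ t ∈ Icc (0 : ℝ) 1, s * t + (1 - s) * l ∈ Icc (0 : ℝ) 1 :=
    fun t ht => (convex_Icc 0 1).mul_add_one_sub_mul_mem ht (Ioo_subset_Icc_self hl) hs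
  have hJensen := affine_le_betaMean hl
    (intervalIntegrable_betaWeight_mul_funHarm_convex_comb (x := x) hl hmin hs)
    (a := φ x - c₁ + (c₁ - c₂) * ((1 - s) * l)) (b := (c₁ - c₂) * s) fun t ht => by
      have := le_funHarm (x := x) (hσ t ht) h₁ h₂
      linarith
  rw [funG_eq_betaMean]
  linarith

theorem funG_le_funHarm_add_funGeom (hs : s ∈ Icc (0 : ℝ) 1) :
    funG f g l s x ≤ (1 - s) * funHarm f g l x + s * funGeom f g l x := by
  rw [funG_eq_betaMean, funGeom_eq_betaMean,
    ← betaMean_const_add_mul hl (intervalIntegrable_betaWeight_mul_funHarm hl hmin)]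
  refine betaMean_mono hl (intervalIntegrable_betaWeight_mul_funHarm_convex_comb hl hmin hs)
    (intervalIntegrable_betaWeight_mul_const_add_mul hl
      (intervalIntegrable_betaWeight_mul_funHarm hl hmin) _ _) fun t ht => ?_
  have := (convexOn_funHarm (x := x) hmin).2 ht (Ioo_subset_Icc_self hl) hs.1
    (sub_nonneg.2 hs.2) (add_sub_cancel s 1)
  simp only [smul_eq_mul] at this
  linarith

end FunG

theorem funG_between_harm_and_geom_general
    {E : Type*} [NormedAddCommGroup E] [NormedSpace ℝ E]
    (l : ℝ) (hl : l ∈ Set.Ioo (0 : ℝ) 1)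
    (f g : E → ℝ)
    (hmin : ∃ φ₀ : E →L[ℝ] ℝ, ∃ c : ℝ, ∀ u : E, φ₀ u - c ≤ f u ∧ φ₀ u - c ≤ g u) :
    ∀ s ∈ Set.Icc (0 : ℝ) 1, ∀ x : E,
      funHarm f g l x ≤ funG f g l s x ∧
      funG f g l s x ≤ (1 - s) * funHarm f g l x + s * funGeom f g l x ∧
      (1 - s) * funHarm f g l x + s * funGeom f g l x ≤ funGeom f g l x := by
  intro s hs x
  have hHarm_le_Geom : funHarm f g l x ≤ funGeom f g l x := by
    simpa only [funG_one] using funHarm_le_funG (x := x) hl hmin (right_mem_Icc.2 zero_le_one)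
  refine ⟨funHarm_le_funG hl hmin hs, funG_le_funHarm_add_funGeom hl hmin hs, ?_⟩
  nlinarith [mul_le_mul_of_nonneg_left hHarm_le_Geom (sub_nonneg.2 hs.2)]

/-- For every `s ∈ [0,1]` and every `x`,
`(f !_λ g)(x) ≤ G_s(f,g;λ)(x) ≤ (1−s)(f !_λ g)(x) + s(f ♯_λ g)(x) ≤ (f ♯_λ g)(x)`. -/
theorem funG_between_harm_and_geom
    {E : Type*} [NormedAddCommGroup E] [NormedSpace ℝ E]
    (l : ℝ) (hl : l ∈ Set.Ioo (0 : ℝ) 1)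
    (f g : E → ℝ)
    (hf : ConvexOn ℝ Set.univ f) (hfc : Continuous f)
    (hg : ConvexOn ℝ Set.univ g) (hgc : Continuous g)
    (hmin : ∃ φ₀ : E →L[ℝ] ℝ, ∃ c : ℝ, ∀ u : E, φ₀ u - c ≤ f u ∧ φ₀ u - c ≤ g u) :
    ∀ s ∈ Set.Icc (0 : ℝ) 1, ∀ x : E,
      funHarm f g l x ≤ funG f g l s x ∧
      funG f g l s x ≤ (1 - s) * funHarm f g l x + s * funGeom f g l x ∧
      (1 - s) * funHarm f g l x + s * funGeom f g l x ≤ funGeom f g l x :=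
  funG_between_harm_and_geom_general l hl f g hmin
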